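/- arXiv:2501.14263 — 2 statements merged into one kernel-verified Lean document; each statement's English description precedes it below -/
import Mathlib

section
/- Let T > 0, K ≥ 0, λ > 0, let δ : [0,T] → [0,K] be measurable, and let h : [0, T+K] → ℝ be measurable with h² integrable. Then for any t ∈ [0,T], ∫_t^T ( ∫_s^{s+δ(s)} e^{λ(s-θ)} |h(θ)| dθ )² ds ≤ ((1 - e^{-2λ K})/(2λ)) · K · ∫_t^{T+K} |h(θ)|² dθ. -/
open MeasureTheory Real Set

theorem stmt4 (T K lam : ℝ) (hT : 0 < T) (hK : 0 ≤ K) (hlam : 0 < lam)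
    (δ : ℝ → ℝ) (hδmeas : Measurable δ)
    (hδ : ∀ s ∈ Set.Icc (0 : ℝ) T, δ s ∈ Set.Icc (0 : ℝ) K)
    (h : ℝ → ℝ) (hmeas : Measurable h)
    (hint : IntegrableOn (fun θ => (h θ) ^ 2) (Set.Icc (0 : ℝ) (T + K)))
    (t : ℝ) (ht : t ∈ Set.Icc (0 : ℝ) T) :
    (∫ s in t..T, (∫ θ in s..(s + δ s), Real.exp (lam * (s - θ)) * |h θ|) ^ 2)
      ≤ ((1 - Real.exp (-(2 * lam * K))) / (2 * lam)) * K * ∫ θ in t..(T + K), |h θ| ^ 2 := by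
  obtain ⟨ht0, htT⟩ := ht
  set C : ℝ := (1 - Real.exp (-(2 * lam * K))) / (2 * lam) with hC
  have hC0 : 0 ≤ C := by
    apply div_nonneg _ (by linarith)
    have : Real.exp (-(2 * lam * K)) ≤ 1 := by
      rw [Real.exp_le_one_iff]
      nlinarith
    linarith
  -- the truncated square function
  set q : ℝ → ℝ := (Set.Icc (0 : ℝ) (T + K)).indicator (fun θ => (h θ) ^ 2) with hqdef
  have hqmeas : Measurable q := ((hmeas.pow_const 2).indicator measurableSet_Icc)
  have hq0 : ∀ θ, 0 ≤ q θ := by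
    intro θ
    by_cases hθ : θ ∈ Set.Icc (0 : ℝ) (T + K)
    · simp [hqdef, hθ, sq_nonneg]
    · simp [hqdef, hθ]
  have hqint : Integrable q := by
    rw [hqdef, MeasureTheory.integrable_indicator_iff measurableSet_Icc]
    exact hint
  set G : ℝ → ℝ := fun x => ∫ u in t..x, q u with hGdef
  have hGcont : Continuous G :=
    intervalIntegral.continuous_primitive (fun a b => hqint.intervalIntegrable) t
  have hGdiff : ∀ x y : ℝ, G y - G x = ∫ u in x..y, q u := by
    intro x y
    exact intervalIntegral.integral_interval_sub_left hqint.intervalIntegrable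
      hqint.intervalIntegrable
  have hGmono : Monotone G := by
    intro x y hxy
    have := hGdiff x y
    have h2 : 0 ≤ ∫ u in x..y, q u :=
      intervalIntegral.integral_nonneg hxy fun u _ => hq0 u
    linarith
  have hGnonneg : ∀ x, t ≤ x → 0 ≤ G x := by
    intro x hx
    exact intervalIntegral.integral_nonneg hx fun u _ => hq0 u
  -- key pointwise estimate
  have key : ∀ s ∈ Set.Icc t T,
      (∫ θ in s..(s + δ s), Real.exp (lam * (s - θ)) * |h θ|) ^ 2
        ≤ C * (G (s + K) - G s) := by
    intro s hs
    obtain ⟨hts, hsT⟩ := hs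
    have hs0 : 0 ≤ s := le_trans ht0 hts
    obtain ⟨hd0, hdK⟩ := hδ s ⟨hs0, hsT⟩
    set d := δ s with hd
    have hsd : s ≤ s + d := by linarith
    have hsub : Set.Ioc s (s + d) ⊆ Set.Icc (0 : ℝ) (T + K) := by
      intro θ hθ
      exact ⟨by linarith [hθ.1], by linarith [hθ.2]⟩
    -- Cauchy–Schwarz
    have hpq : (2 : ℝ).HolderConjugate 2 := ⟨by norm_num, by norm_num, by norm_num⟩
    set μ := volume.restrict (Set.Ioc s (s + d)) with hμ
    have hfmem : MemLp (fun θ => Real.exp (lam * (s - θ))) (ENNReal.ofReal 2) μ := by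
      have h2 : (ENNReal.ofReal 2) = 2 := by norm_num
      rw [h2, memLp_two_iff_integrable_sq
        (Continuous.aestronglyMeasurable (by fun_prop))]
      exact (Continuous.integrableOn_Ioc (by fun_prop))
    have hgmem : MemLp (fun θ => |h θ|) (ENNReal.ofReal 2) μ := by
      have h2 : (ENNReal.ofReal 2) = 2 := by norm_num
      rw [h2, memLp_two_iff_integrable_sq hmeas.abs.aestronglyMeasurable]
      have : IntegrableOn (fun θ => (h θ) ^ 2) (Set.Ioc s (s + d)) := hint.mono_set hsub
      simp only [sq_abs]
      exact this
    have hcs := MeasureTheory.integral_mul_le_Lp_mul_Lq_of_nonneg hpq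
      (Filter.Eventually.of_forall fun θ => (Real.exp_pos _).le)
      (Filter.Eventually.of_forall fun θ => abs_nonneg _) hfmem hgmem
    set A := ∫ θ, Real.exp (lam * (s - θ)) ^ (2 : ℝ) ∂μ with hA
    set B := ∫ θ, |h θ| ^ (2 : ℝ) ∂μ with hB
    have hA0 : 0 ≤ A := integral_nonneg fun θ => Real.rpow_nonneg (Real.exp_pos _).le _
    have hB0 : 0 ≤ B := integral_nonneg fun θ => Real.rpow_nonneg (abs_nonneg _) _
    have hIeq : (∫ θ in s..(s + d), Real.exp (lam * (s - θ)) * |h θ|)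
        = ∫ θ, Real.exp (lam * (s - θ)) * |h θ| ∂μ := by
      rw [intervalIntegral.integral_of_le hsd]
    have hInn : 0 ≤ ∫ θ, Real.exp (lam * (s - θ)) * |h θ| ∂μ :=
      integral_nonneg fun θ => mul_nonneg (Real.exp_pos _).le (abs_nonneg _)
    have hsq : (∫ θ in s..(s + d), Real.exp (lam * (s - θ)) * |h θ|) ^ 2 ≤ A * B := by
      rw [hIeq]
      calc (∫ θ, Real.exp (lam * (s - θ)) * |h θ| ∂μ) ^ 2
          ≤ (A ^ (1 / 2 : ℝ) * B ^ (1 / 2 : ℝ)) ^ 2 := by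
            apply pow_le_pow_left₀ hInn hcs
        _ = A * B := by
            rw [mul_pow, ← Real.rpow_natCast (A ^ (1/2:ℝ)) 2, ← Real.rpow_natCast (B ^ (1/2:ℝ)) 2,
              ← Real.rpow_mul hA0, ← Real.rpow_mul hB0]
            norm_num
    -- bound A by C
    have hAval : A ≤ C := by
      have hA1 : A = ∫ θ in s..(s + d), Real.exp (2 * lam * (s - θ)) := by
        rw [hA, hμ, ← intervalIntegral.integral_of_le hsd]
        apply intervalIntegral.integral_congr
        intro θ _
        show Real.exp (lam * (s - θ)) ^ (2:ℝ) = Real.exp (2 * lam * (s - θ))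
        rw [← Real.exp_mul]
        ring_nf
      have hmono : (∫ θ in s..(s + d), Real.exp (2 * lam * (s - θ)))
          ≤ ∫ θ in s..(s + K), Real.exp (2 * lam * (s - θ)) := by
        apply intervalIntegral.integral_mono_interval (le_refl s) hsd (by linarith)
        · exact Filter.Eventually.of_forall fun θ => (Real.exp_pos _).le
        · exact Continuous.intervalIntegrable (by fun_prop) _ _
      have hcomp : (∫ θ in s..(s + K), Real.exp (2 * lam * (s - θ))) = C := by
        have hderiv : ∀ θ ∈ Set.uIcc s (s + K),
            HasDerivAt (fun θ => -(1 / (2 * lam)) * Real.exp (2 * lam * (s - θ)))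
              (Real.exp (2 * lam * (s - θ))) θ := by
          intro θ _
          have h1 : HasDerivAt (fun θ : ℝ => 2 * lam * (s - θ)) (-(2 * lam)) θ := by
            simpa using (((hasDerivAt_id θ).const_sub s).const_mul (2 * lam))
          have h2 := (h1.exp).const_mul (-(1 / (2 * lam)))
          convert h2 using 1
          · rfl
          · rfl
          · field_simp
        rw [intervalIntegral.integral_eq_sub_of_hasDerivAt hderiv
          (Continuous.intervalIntegrable (by fun_prop) _ _)]
        have : 2 * lam * (s - (s + K)) = -(2 * lam * K) := by ring
        rw [this]
        have : 2 * lam * (s - s) = 0 := by ring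
        rw [this, Real.exp_zero, hC]
        field_simp
        ring
      linarith
    -- bound B
    have hBval : B ≤ G (s + K) - G s := by
      have hB1 : B = ∫ θ in Set.Ioc s (s + d), q θ := by
        rw [hB, hμ]
        apply setIntegral_congr_fun measurableSet_Ioc
        intro θ hθ
        show |h θ| ^ (2:ℝ) = q θ
        rw [show (2:ℝ) = ((2:ℕ):ℝ) by norm_num, Real.rpow_natCast, sq_abs,
          hqdef, Set.indicator_of_mem (hsub hθ)]
      have hB2 : (∫ θ in Set.Ioc s (s + d), q θ) ≤ ∫ θ in Set.Ioc s (s + K), q θ := by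
        apply setIntegral_mono_set hqint.integrableOn
          (Filter.Eventually.of_forall hq0)
        exact Filter.Eventually.of_forall (Set.Ioc_subset_Ioc_right (by linarith))
      have hB3 : (∫ θ in Set.Ioc s (s + K), q θ) = G (s + K) - G s := by
        rw [hGdiff s (s + K), intervalIntegral.integral_of_le (by linarith)]
      linarith [hB1, hB2, hB3]
    calc (∫ θ in s..(s + d), Real.exp (lam * (s - θ)) * |h θ|) ^ 2
        ≤ A * B := hsq
      _ ≤ C * (G (s + K) - G s) := mul_le_mul hAval hBval hB0 hC0
  -- measurability / integrability of the LHS integrand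
  have hmeasLHS : StronglyMeasurable (fun s : ℝ =>
      ∫ θ, Set.indicator {p : ℝ × ℝ | p.1 < p.2 ∧ p.2 ≤ p.1 + δ p.1}
        (fun p => Real.exp (lam * (p.1 - p.2)) * |h p.2|) (s, θ)) := by
    apply MeasureTheory.StronglyMeasurable.integral_prod_right'
    apply Measurable.stronglyMeasurable
    apply Measurable.indicator
    · fun_prop
    · apply MeasurableSet.inter
      · exact measurableSet_lt measurable_fst measurable_snd
      · exact measurableSet_le measurable_snd (measurable_fst.add (hδmeas.comp measurable_fst))
  have heqLHS : ∀ s ∈ Set.Ioc t T,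
      (∫ θ in s..(s + δ s), Real.exp (lam * (s - θ)) * |h θ|)
        = ∫ θ, Set.indicator {p : ℝ × ℝ | p.1 < p.2 ∧ p.2 ≤ p.1 + δ p.1}
            (fun p => Real.exp (lam * (p.1 - p.2)) * |h p.2|) (s, θ) := by
    intro s hs
    have hs0 : 0 ≤ s := le_trans ht0 hs.1.le
    obtain ⟨hd0, hdK⟩ := hδ s ⟨hs0, hs.2⟩
    rw [intervalIntegral.integral_of_le (by linarith), ← integral_indicator measurableSet_Ioc]
    apply integral_congr_ae
    apply Filter.Eventually.of_forall
    intro θ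
    show (Set.Ioc s (s + δ s)).indicator (fun θ => Real.exp (lam * (s - θ)) * |h θ|) θ
        = Set.indicator {p : ℝ × ℝ | p.1 < p.2 ∧ p.2 ≤ p.1 + δ p.1}
            (fun p => Real.exp (lam * (p.1 - p.2)) * |h p.2|) (s, θ)
    by_cases hθ : θ ∈ Set.Ioc s (s + δ s)
    · have hmem : (s, θ) ∈ {p : ℝ × ℝ | p.1 < p.2 ∧ p.2 ≤ p.1 + δ p.1} := ⟨hθ.1, hθ.2⟩
      rw [Set.indicator_of_mem hθ, Set.indicator_of_mem hmem]
    · have hmem : (s, θ) ∉ {p : ℝ × ℝ | p.1 < p.2 ∧ p.2 ≤ p.1 + δ p.1} :=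
        fun hmem => hθ ⟨hmem.1, hmem.2⟩
      rw [Set.indicator_of_notMem hθ, Set.indicator_of_notMem hmem]
  have hbound : ∀ s ∈ Set.Icc t T,
      (∫ θ in s..(s + δ s), Real.exp (lam * (s - θ)) * |h θ|) ^ 2 ≤ C * ∫ θ, q θ := by
    intro s hs
    refine le_trans (key s hs) ?_
    apply mul_le_mul_of_nonneg_left _ hC0
    rw [hGdiff s (s + K), intervalIntegral.integral_of_le (by linarith)]
    exact setIntegral_le_integral hqint (Filter.Eventually.of_forall hq0)
  have hLHSint : IntervalIntegrable
      (fun s => (∫ θ in s..(s + δ s), Real.exp (lam * (s - θ)) * |h θ|) ^ 2) volume t T := by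
    rw [intervalIntegrable_iff_integrableOn_Ioc_of_le htT]
    apply MeasureTheory.Integrable.mono' (g := fun _ => C * ∫ θ, q θ)
      (integrableOn_const measure_Ioc_lt_top.ne)
    · apply AEStronglyMeasurable.congr
        ((hmeasLHS.pow 2).aestronglyMeasurable.restrict)
      filter_upwards [ae_restrict_mem measurableSet_Ioc] with s hs
      simp only [Pi.pow_apply]
      rw [heqLHS s hs]
    · filter_upwards [ae_restrict_mem measurableSet_Ioc] with s hs
      rw [Real.norm_of_nonneg (sq_nonneg _)]
      exact hbound s ⟨hs.1.le, hs.2⟩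
  -- RHS integrand integrable (continuous)
  have hRHSint : IntervalIntegrable (fun s => C * (G (s + K) - G s)) volume t T :=
    Continuous.intervalIntegrable (by fun_prop) _ _
  have step1 : (∫ s in t..T, (∫ θ in s..(s + δ s), Real.exp (lam * (s - θ)) * |h θ|) ^ 2)
      ≤ ∫ s in t..T, C * (G (s + K) - G s) :=
    intervalIntegral.integral_mono_on htT hLHSint hRHSint key
  -- compute/bound the outer integral
  have hGint : ∀ a b : ℝ, IntervalIntegrable G volume a b :=
    fun a b => Continuous.intervalIntegrable hGcont a b
  have step2 : (∫ s in t..T, C * (G (s + K) - G s))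
      = C * ((∫ s in T..(T + K), G s) - ∫ s in t..(t + K), G s) := by
    rw [intervalIntegral.integral_const_mul]
    congr 1
    have hGK : IntervalIntegrable (fun x => G (x + K)) volume t T :=
      Continuous.intervalIntegrable (hGcont.comp (continuous_id.add continuous_const)) t T
    rw [intervalIntegral.integral_sub hGK (hGint _ _)]
    rw [intervalIntegral.integral_comp_add_right G K]
    have e1 : (∫ s in t..(t + K), G s) + ∫ s in (t + K)..(T + K), G s
        = ∫ s in t..(T + K), G s :=
      intervalIntegral.integral_add_adjacent_intervals (hGint _ _) (hGint _ _)
    have e2 : (∫ s in t..T, G s) + ∫ s in T..(T + K), G s = ∫ s in t..(T + K), G s :=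
      intervalIntegral.integral_add_adjacent_intervals (hGint _ _) (hGint _ _)
    linarith
  have h1 : 0 ≤ ∫ s in t..(t + K), G s :=
    intervalIntegral.integral_nonneg (by linarith) fun x hx => hGnonneg x hx.1
  have h2 : (∫ s in T..(T + K), G s) ≤ K * G (T + K) := by
    have : (∫ s in T..(T + K), G s) ≤ ∫ _ in T..(T + K), G (T + K) := by
      apply intervalIntegral.integral_mono_on (by linarith) (hGint _ _)
        (intervalIntegrable_const)
      intro x hx
      exact hGmono hx.2
    exact this.trans_eq (by rw [intervalIntegral.integral_const, smul_eq_mul]; ring_nf)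
  have hGfin : G (T + K) = ∫ θ in t..(T + K), |h θ| ^ 2 := by
    rw [hGdef]
    apply intervalIntegral.integral_congr
    intro θ hθ
    rw [Set.uIcc_of_le (by linarith)] at hθ
    have : θ ∈ Set.Icc (0 : ℝ) (T + K) := ⟨le_trans ht0 hθ.1, hθ.2⟩
    simp [hqdef, Set.indicator_of_mem this, sq_abs]
  calc (∫ s in t..T, (∫ θ in s..(s + δ s), Real.exp (lam * (s - θ)) * |h θ|) ^ 2)
      ≤ C * ((∫ s in T..(T + K), G s) - ∫ s in t..(t + K), G s) := by
        rw [← step2]; exact step1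
    _ ≤ C * (K * G (T + K)) := by
        apply mul_le_mul_of_nonneg_left _ hC0
        linarith
    _ = C * K * ∫ θ in t..(T + K), |h θ| ^ 2 := by rw [hGfin]; ring
end

section
/- Let T > 0, K ≥ 0, λ > 0, H ∈ [0, T+K), and let y : [H, T+K] → ℝ be measurable with y² integrable. Let δ : [H,T] → [0,K] be measurable with s + δ(s) ≤ T+K for all s. Then ∫_H^T ( ∫_t^T ( ∫_s^{s+δ(s)} e^{λ(s-θ)} |y(θ)| dθ ) ds )² dt ≤ ((1 - e^{-2λ(T+K)})/(2λ)) · (T+K−H)³ · ∫_H^{T+K} |y(θ)|² dθ. -/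
open MeasureTheory Real Set

theorem stmt14 (T K lam H : ℝ) (hT : 0 < T) (hK : 0 ≤ K) (hlam : 0 < lam)
    (hH0 : 0 ≤ H) (hH : H < T + K)
    (y : ℝ → ℝ) (hy : Measurable y)
    (hy2 : IntegrableOn (fun θ => (y θ) ^ 2) (Set.Icc H (T + K)))
    (δ : ℝ → ℝ) (hδmeas : Measurable δ)
    (hδ : ∀ s ∈ Set.Icc H T, δ s ∈ Set.Icc (0 : ℝ) K)
    (hδT : ∀ s ∈ Set.Icc H T, s + δ s ≤ T + K) :
    (∫ t in H..T, (∫ s in t..T, ∫ θ in s..(s + δ s), Real.exp (lam * (s - θ)) * |y θ|) ^ 2)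
      ≤ ((1 - Real.exp (-(2 * lam * (T + K)))) / (2 * lam)) * (T + K - H) ^ 3
          * ∫ θ in H..(T + K), |y θ| ^ 2 := by
  set C : ℝ := (1 - Real.exp (-(2 * lam * (T + K)))) / (2 * lam) with hCdef
  set I : ℝ := ∫ θ in H..(T + K), |y θ| ^ 2 with hIdef
  have hHTK : H ≤ T + K := hH.le
  have hC : 0 ≤ C := by
    apply div_nonneg _ (by linarith)
    have h1 : Real.exp (-(2 * lam * (T + K))) ≤ 1 := by
      rw [Real.exp_le_one_iff]
      nlinarith
    linarith
  have hI0 : 0 ≤ I :=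
    intervalIntegral.integral_nonneg hHTK (fun θ _ => sq_nonneg _)
  by_cases hHT : H ≤ T
  case neg =>
    push_neg at hHT
    have hL : (∫ t in H..T,
        (∫ s in t..T, ∫ θ in s..(s + δ s), Real.exp (lam * (s - θ)) * |y θ|) ^ 2) ≤ 0 := by
      rw [intervalIntegral.integral_symm]
      exact neg_nonpos_of_nonneg
        (intervalIntegral.integral_nonneg hHT.le (fun t _ => sq_nonneg _))
    refine hL.trans ?_
    exact mul_nonneg (mul_nonneg hC (pow_nonneg (by linarith) 3)) hI0
  case pos =>
  have hIset : I = ∫ θ in Set.Ioc H (T + K), |y θ| ^ 2 :=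
    intervalIntegral.integral_of_le hHTK
  have hyI : IntegrableOn (fun θ => |y θ| ^ 2) (Set.Ioc H (T + K)) := by
    simpa [sq_abs] using hy2.mono_set Set.Ioc_subset_Icc_self
  -- key pointwise bound on the inner integral
  have key : ∀ s, H ≤ s → s ≤ T →
      (∫ θ in s..(s + δ s), Real.exp (lam * (s - θ)) * |y θ|)
        ≤ Real.sqrt C * Real.sqrt I := by
    intro s hs1 hs2
    have hδs := hδ s ⟨hs1, hs2⟩
    have hδ0 : 0 ≤ δ s := hδs.1
    have hδK : δ s ≤ K := hδs.2
    have hsb : s ≤ s + δ s := by linarith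
    have hsTK : s + δ s ≤ T + K := hδT s ⟨hs1, hs2⟩
    have hsub : Set.Ioc s (s + δ s) ⊆ Set.Ioc H (T + K) :=
      Set.Ioc_subset_Ioc (by linarith) hsTK
    rw [intervalIntegral.integral_of_le hsb]
    have hc : Continuous fun θ : ℝ => Real.exp (lam * (s - θ)) :=
      Real.continuous_exp.comp (continuous_const.mul (continuous_const.sub continuous_id))
    have hfm : AEStronglyMeasurable (fun θ => Real.exp (lam * (s - θ)))
        (volume.restrict (Set.Ioc s (s + δ s))) := hc.aestronglyMeasurable
    have hgm : AEStronglyMeasurable (fun θ => |y θ|)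
        (volume.restrict (Set.Ioc s (s + δ s))) := hy.abs.aestronglyMeasurable
    have hf2 : Integrable (fun θ => (Real.exp (lam * (s - θ))) ^ 2)
        (volume.restrict (Set.Ioc s (s + δ s))) :=
      (hc.pow 2).integrableOn_Ioc
    have hg2 : Integrable (fun θ => (|y θ|) ^ 2)
        (volume.restrict (Set.Ioc s (s + δ s))) := hyI.mono_set hsub
    have h2 : ENNReal.ofReal (2 : ℝ) = 2 := by norm_num
    have hfL : MemLp (fun θ => Real.exp (lam * (s - θ))) (ENNReal.ofReal 2)
        (volume.restrict (Set.Ioc s (s + δ s))) := by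
      rw [h2]; exact (memLp_two_iff_integrable_sq hfm).mpr hf2
    have hgL : MemLp (fun θ => |y θ|) (ENNReal.ofReal 2)
        (volume.restrict (Set.Ioc s (s + δ s))) := by
      rw [h2]; exact (memLp_two_iff_integrable_sq hgm).mpr hg2
    have hpq : Real.HolderConjugate 2 2 := Real.HolderConjugate.two_two
    have hCS := integral_mul_le_Lp_mul_Lq_of_nonneg hpq
      (Filter.Eventually.of_forall fun θ => (Real.exp_pos _).le)
      (Filter.Eventually.of_forall fun θ => abs_nonneg _) hfL hgL
    have h2n : ((2 : ℝ)) = ((2 : ℕ) : ℝ) := by norm_num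
    rw [h2n] at hCS
    simp_rw [Real.rpow_natCast] at hCS
    refine hCS.trans ?_
    -- bound the two factors
    have hA0 : 0 ≤ ∫ θ in Set.Ioc s (s + δ s), (Real.exp (lam * (s - θ))) ^ 2 :=
      integral_nonneg fun _ => sq_nonneg _
    have hB0 : 0 ≤ ∫ θ in Set.Ioc s (s + δ s), (|y θ|) ^ 2 :=
      integral_nonneg fun _ => sq_nonneg _
    have hAeq : (∫ θ in Set.Ioc s (s + δ s), (Real.exp (lam * (s - θ))) ^ 2)
        = (1 - Real.exp (-(2 * lam * δ s))) / (2 * lam) := by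
      rw [← intervalIntegral.integral_of_le hsb]
      have hF : ∀ x ∈ Set.uIcc s (s + δ s),
          HasDerivAt (fun θ => -(Real.exp (2 * lam * (s - θ)) / (2 * lam)))
            ((Real.exp (lam * (s - x))) ^ 2) x := by
        intro x _
        have h1 : HasDerivAt (fun θ : ℝ => 2 * lam * (s - θ)) (-(2 * lam)) x := by
          simpa using (((hasDerivAt_id x).const_sub s).const_mul (2 * lam))
        have h3 := (((Real.hasDerivAt_exp (2 * lam * (s - x))).comp x h1).div_const
          (2 * lam)).neg
        refine h3.congr_deriv ?_
        have he : Real.exp (lam * (s - x)) ^ 2 = Real.exp (2 * lam * (s - x)) := by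
          rw [← Real.exp_nat_mul]; norm_num; ring_nf
        rw [he]
        field_simp
      have hint : IntervalIntegrable (fun θ => (Real.exp (lam * (s - θ))) ^ 2)
          volume s (s + δ s) := (hc.pow 2).intervalIntegrable _ _
      rw [intervalIntegral.integral_eq_sub_of_hasDerivAt hF hint]
      have e1 : 2 * lam * (s - (s + δ s)) = -(2 * lam * δ s) := by ring
      have e2 : 2 * lam * (s - s) = 0 := by ring
      rw [e1, e2, Real.exp_zero]
      field_simp
      ring
    have hA : (∫ θ in Set.Ioc s (s + δ s), (Real.exp (lam * (s - θ))) ^ 2) ≤ C := by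
      rw [hAeq, hCdef]
      have : Real.exp (-(2 * lam * (T + K))) ≤ Real.exp (-(2 * lam * δ s)) :=
        Real.exp_le_exp.mpr (by nlinarith)
      apply div_le_div_of_nonneg_right ?h ?hc |>.trans_eq rfl
      case h => linarith
      case hc => linarith
    have hB : (∫ θ in Set.Ioc s (s + δ s), (|y θ|) ^ 2) ≤ I := by
      rw [hIset]
      exact setIntegral_mono_set hyI
        (Filter.Eventually.of_forall fun θ => sq_nonneg _)
        (HasSubset.Subset.eventuallyLE hsub)
    calc (∫ θ in Set.Ioc s (s + δ s), (Real.exp (lam * (s - θ))) ^ 2) ^ (1 / (2:ℝ))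
          * (∫ θ in Set.Ioc s (s + δ s), (|y θ|) ^ 2) ^ (1 / (2:ℝ))
        ≤ C ^ (1 / (2:ℝ)) * I ^ (1 / (2:ℝ)) := by
          apply mul_le_mul (Real.rpow_le_rpow hA0 hA (by norm_num))
            (Real.rpow_le_rpow hB0 hB (by norm_num))
            (Real.rpow_nonneg hB0 _) (Real.rpow_nonneg hC _)
      _ = Real.sqrt C * Real.sqrt I := by
          rw [Real.sqrt_eq_rpow, Real.sqrt_eq_rpow]
  -- middle bound
  have hB0' : 0 ≤ Real.sqrt C * Real.sqrt I :=
    mul_nonneg (Real.sqrt_nonneg _) (Real.sqrt_nonneg _)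
  have mid : ∀ t, H ≤ t → t ≤ T →
      ‖∫ s in t..T, ∫ θ in s..(s + δ s), Real.exp (lam * (s - θ)) * |y θ|‖
        ≤ Real.sqrt C * Real.sqrt I * (T + K - H) := by
    intro t ht1 ht2
    have h1 : ‖∫ s in t..T, ∫ θ in s..(s + δ s), Real.exp (lam * (s - θ)) * |y θ|‖
        ≤ (Real.sqrt C * Real.sqrt I) * |T - t| := by
      apply intervalIntegral.norm_integral_le_of_norm_le_const
      intro x hx
      rw [Set.uIoc_of_le ht2] at hx
      have hx1 : H ≤ x := le_trans ht1 hx.1.le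
      have hx2 : x ≤ T := hx.2
      have hnn : 0 ≤ ∫ θ in x..(x + δ x), Real.exp (lam * (x - θ)) * |y θ| := by
        apply intervalIntegral.integral_nonneg (by linarith [(hδ x ⟨hx1, hx2⟩).1])
        intro θ _
        exact mul_nonneg (Real.exp_pos _).le (abs_nonneg _)
      rw [Real.norm_eq_abs, abs_of_nonneg hnn]
      exact key x hx1 hx2
    refine h1.trans ?_
    have h2 : |T - t| ≤ T + K - H := by
      rw [abs_of_nonneg (by linarith : (0:ℝ) ≤ T - t)]; linarith
    exact mul_le_mul_of_nonneg_left h2 hB0'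
  -- outer bound
  have hout : ‖∫ t in H..T,
      (∫ s in t..T, ∫ θ in s..(s + δ s), Real.exp (lam * (s - θ)) * |y θ|) ^ 2‖
        ≤ (Real.sqrt C * Real.sqrt I * (T + K - H)) ^ 2 * |T - H| := by
    apply intervalIntegral.norm_integral_le_of_norm_le_const
    intro t ht
    rw [Set.uIoc_of_le hHT] at ht
    have h1 := mid t ht.1.le ht.2
    rw [norm_pow]
    exact pow_le_pow_left₀ (norm_nonneg _) h1 2
  have hBsq : (Real.sqrt C * Real.sqrt I) ^ 2 = C * I := by
    rw [mul_pow, Real.sq_sqrt hC, Real.sq_sqrt hI0]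
  calc (∫ t in H..T,
      (∫ s in t..T, ∫ θ in s..(s + δ s), Real.exp (lam * (s - θ)) * |y θ|) ^ 2)
      ≤ ‖∫ t in H..T,
        (∫ s in t..T, ∫ θ in s..(s + δ s), Real.exp (lam * (s - θ)) * |y θ|) ^ 2‖ :=
        le_abs_self _
    _ ≤ (Real.sqrt C * Real.sqrt I * (T + K - H)) ^ 2 * |T - H| := hout
    _ ≤ (Real.sqrt C * Real.sqrt I * (T + K - H)) ^ 2 * (T + K - H) := by
        have h1 : |T - H| ≤ T + K - H := by
          rw [abs_of_nonneg (by linarith : (0:ℝ) ≤ T - H)]; linarith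
        exact mul_le_mul_of_nonneg_left h1 (sq_nonneg _)
    _ = C * (T + K - H) ^ 3 * I := by
        rw [mul_pow, hBsq]; ring
end
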